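/- Objective convergence controlled by gradient convergence: in the Lasso case (trivial groups Γ = {{j}}_{j=1}^p) with F convex, C^{1,1} satisfying ‖∇F(x)−∇F(x')‖_∞ ≤ M_F‖x−x'‖₁ and gradient bound K on the relevant sublevel set, let (u_k,v_k) be gradient descent iterates on G(u,v) = ½‖u‖² + ½‖v‖² + F(u·v) with stepsize τ = 1/(κ M_G) where M_G bounds the Lipschitz constant of ∇G and κ = max(1,(1+K²)/M_G), and set x_k := u_k·v_k, Φ(x) := F(x) + ‖x‖₁. Then there exists C > 0 such that for all k, Φ(x_k) − lim_{j→∞} Φ(x_j) ≤ C Σ_{j=k}^∞ ‖∇G(u_j,v_j)‖² + C ρ^k, where ρ := 1 − 1/(κ M_G). In particular, if ‖∇G(u_k,v_k)‖ = O(1/k), then Φ(x_k) converges at rate O(1/k). -/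

import Mathlib

/-! Along the segment between two points of the ball `½(‖u‖² + ‖v‖²) ≤ B²/2` the gradient of `G`
is `M_G`-Lipschitz, so a step of size `τ ≤ 1/M_G` decreases `G` by at least `τ/2 ‖∇G‖²` and at
most `3τ/2 ‖∇G‖²`. Hence `G(u_k, v_k)` decreases to a limit and exceeds it by at most `3τ/2` times
the tail sum of `‖∇G‖²`.

Since `|u_i v_i| ≤ (u_i² + v_i²)/2`, we have `Φ(u·v) ≤ G(u, v)`, with a gap at most
`½ Σ |u_i² - v_i²|`. A gradient step multiplies `u_i² - v_i²` by `(1 - τ)² - τ² ∇F_i²`, of modulus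
at most `1 - τ`, so the gap vanishes geometrically and `Φ(x_k)` has the same limit as `G`. The rate
then comes from `Σ_{j ≥ k} 1/j² ≤ 2/k`. -/

open Filter

/-- The continuous linear functional `w ↦ ⟨grad, w⟩` on `ℝ^p`. -/
noncomputable def vecCLM {p : ℕ} (grad : Fin p → ℝ) : (Fin p → ℝ) →L[ℝ] ℝ :=
  LinearMap.toContinuousLinearMap (∑ i, grad i • LinearMap.proj i)

/-- `∇_u G(u,v) = u + v·∇F(u·v)` (trivial groups, coordinatewise product). -/
def guL {p : ℕ} (DF : (Fin p → ℝ) → (Fin p → ℝ)) (u v : Fin p → ℝ) : Fin p → ℝ :=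
  fun i => u i + v i * DF (fun i' => u i' * v i') i

/-- `∇_v G(u,v) = v + u·∇F(u·v)` (trivial groups). -/
def gvL {p : ℕ} (DF : (Fin p → ℝ) → (Fin p → ℝ)) (u v : Fin p → ℝ) : Fin p → ℝ :=
  fun i => v i + u i * DF (fun i' => u i' * v i') i

/-- `G(u,v) = ½‖u‖² + ½‖v‖² + F(u·v)` (trivial groups). -/
noncomputable def Gobj {p : ℕ} (F : (Fin p → ℝ) → ℝ) (u v : Fin p → ℝ) : ℝ :=
  (1/2) * ∑ i, (u i)^2 + (1/2) * ∑ i, (v i)^2 + F (fun i => u i * v i)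

/-- `‖∇G(u,v)‖²` (trivial groups). -/
noncomputable def gradGsqL {p : ℕ} (DF : (Fin p → ℝ) → (Fin p → ℝ))
    (u v : Fin p → ℝ) : ℝ :=
  ∑ i, (guL DF u v i)^2 + ∑ i, (gvL DF u v i)^2

open Finset Topology

def lassoObjective {p : ℕ} (F : (Fin p → ℝ) → ℝ) (x : Fin p → ℝ) : ℝ :=
  F x + ∑ i, |x i|

theorem vecCLM_apply {p : ℕ} (grad w : Fin p → ℝ) : vecCLM grad w = ∑ i, grad i * w i := by
  simp [vecCLM, LinearMap.toContinuousLinearMap]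

theorem abs_sub_sub_deriv_le_of_abs_deriv_sub_le {φ φ' : ℝ → ℝ} {L : ℝ}
    (hφ : ∀ t ∈ Set.Icc (0 : ℝ) 1, HasDerivAt φ (φ' t) t)
    (hφ' : ∀ t ∈ Set.Icc (0 : ℝ) 1, |φ' t - φ' 0| ≤ L * t) :
    |φ 1 - φ 0 - φ' 0| ≤ L / 2 := by
  have key := image_norm_le_of_norm_deriv_right_le_deriv_boundary
    (f := fun t => φ t - φ 0 - t * φ' 0) (f' := fun t => φ' t - φ' 0)
    (B := fun t => L / 2 * t ^ 2) (B' := fun t => L * t) (a := 0) (b := 1)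
    (fun t ht => ((hφ t ht).continuousAt.sub continuousAt_const).sub
      (continuousAt_id.mul continuousAt_const) |>.continuousWithinAt)
    (fun t ht => by
      simpa using (((hφ t (Set.Ico_subset_Icc_self ht)).sub_const (φ 0)).fun_sub
        ((hasDerivAt_id t).mul_const (φ' 0))).hasDerivWithinAt)
    (by simp)
    (fun t => ((hasDerivAt_pow 2 t).const_mul (L / 2)).congr_deriv (by push_cast; ring))
    (fun t ht => hφ' t (Set.Ico_subset_Icc_self ht))
    (Set.right_mem_Icc.2 zero_le_one)
  simpa using key

theorem abs_sum_mul_add_sum_mul_le {ι : Type*} [Fintype ι] (f g a b : ι → ℝ) :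
    |∑ i, f i * a i + ∑ i, g i * b i| ≤
      √(∑ i, f i ^ 2 + ∑ i, g i ^ 2) * √(∑ i, a i ^ 2 + ∑ i, b i ^ 2) := by
  have h := Finset.sum_mul_sq_le_sq_mul_sq univ (Sum.elim f g) (Sum.elim a b)
  simp only [Fintype.sum_sum_type, Sum.elim_inl, Sum.elim_inr] at h
  rw [← Real.sqrt_sq_eq_abs, ← Real.sqrt_mul (by positivity)]
  exact Real.sqrt_le_sqrt h

theorem sum_sq_add_smul_le {ι : Type*} [Fintype ι] (x d : ι → ℝ) {t : ℝ}
    (ht : t ∈ Set.Icc (0 : ℝ) 1) :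
    ∑ i, (x + t • d) i ^ 2 ≤ (1 - t) * ∑ i, x i ^ 2 + t * ∑ i, (x + d) i ^ 2 := by
  rw [mul_sum, mul_sum, ← sum_add_distrib]
  refine sum_le_sum fun i _ => ?_
  simp only [Pi.add_apply, Pi.smul_apply, smul_eq_mul]
  nlinarith [mul_nonneg (mul_nonneg ht.1 (sub_nonneg.2 ht.2)) (sq_nonneg (d i))]

theorem abs_mul_le_half_sq_add_sq (a b : ℝ) : |a * b| ≤ (a ^ 2 + b ^ 2) / 2 := by
  rw [abs_mul, ← sq_abs a, ← sq_abs b]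
  nlinarith [sq_nonneg (|a| - |b|)]

theorem half_sq_add_sq_sub_abs_mul_le (a b : ℝ) :
    (a ^ 2 + b ^ 2) / 2 - |a * b| ≤ |a ^ 2 - b ^ 2| / 2 := by
  rw [abs_mul, ← sq_abs a, ← sq_abs b, sq_sub_sq, abs_mul,
    abs_of_nonneg (add_nonneg (abs_nonneg a) (abs_nonneg b))]
  nlinarith [abs_sub_abs_le_abs_sub (|a|) (|b|), le_abs_self (|a| - |b|), neg_abs_le (|a| - |b|),
    abs_nonneg a, abs_nonneg b, abs_nonneg (|a| - |b|)]

theorem sum_abs_mul_le {ι : Type*} [Fintype ι] (u v : ι → ℝ) :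
    ∑ i, |(u * v) i| ≤ (1/2) * ((∑ i, (u i)^2) + ∑ i, (v i)^2) := by
  rw [← sum_add_distrib, mul_sum]
  exact sum_le_sum fun i _ => (abs_mul_le_half_sq_add_sq _ _).trans_eq (by ring)

theorem abs_sq_sub_sq_gradStep_le {u v w τ : ℝ} (hτ : 0 ≤ τ) (hτw : τ * (1 + w ^ 2) ≤ 1) :
    |(u - τ * (u + v * w)) ^ 2 - (v - τ * (v + u * w)) ^ 2| ≤ (1 - τ) * |u ^ 2 - v ^ 2| := by
  have factor : (u - τ * (u + v * w)) ^ 2 - (v - τ * (v + u * w)) ^ 2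
      = ((1 - τ) ^ 2 - τ ^ 2 * w ^ 2) * (u ^ 2 - v ^ 2) := by ring
  have hcontr : |(1 - τ) ^ 2 - τ ^ 2 * w ^ 2| ≤ 1 - τ := by
    rw [abs_le]
    constructor <;> nlinarith [sq_nonneg w, mul_nonneg hτ (sq_nonneg w)]
  rw [factor, abs_mul]
  exact mul_le_mul_of_nonneg_right hcontr (abs_nonneg _)

theorem summable_and_tendsto_iInf_of_add_mul_le {a b : ℕ → ℝ} {c : ℝ} (hc : 0 < c)
    (hb : ∀ k, 0 ≤ b k) (ha : BddBelow (Set.range a)) (h : ∀ k, a (k + 1) + c * b k ≤ a k) :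
    Summable b ∧ Tendsto a atTop (𝓝 (⨅ k, a k)) := by
  obtain ⟨m, hm⟩ := ha
  have partial_sum : ∀ n, c * ∑ j ∈ range n, b j ≤ a 0 - a n := by
    intro n
    induction n with
    | zero => simp
    | succ n ih => rw [sum_range_succ, mul_add]; linarith [h n]
  refine ⟨summable_of_sum_range_le (c := (a 0 - m) / c) hb fun n => ?_,
    tendsto_atTop_ciInf ?_ ⟨m, hm⟩⟩
  · rw [le_div_iff₀' hc]
    linarith [partial_sum n, hm ⟨n, rfl⟩]
  · exact antitone_nat_of_succ_le fun k => by nlinarith [h k, hb k]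

theorem sub_le_mul_tsum_of_sub_succ_le {a b : ℕ → ℝ} {C L : ℝ} (hC : 0 ≤ C)
    (hb : ∀ k, 0 ≤ b k) (hs : Summable b) (ha : Tendsto a atTop (𝓝 L))
    (h : ∀ k, a k - a (k + 1) ≤ C * b k) (k : ℕ) :
    a k - L ≤ C * ∑' j, b (k + j) := by
  have shifted : Summable fun j => b (k + j) := by
    simpa only [add_comm k] using (summable_nat_add_iff k).2 hs
  have partial_sum : ∀ n, a k - a (k + n) ≤ C * ∑' j, b (k + j) := by
    intro n
    calc a k - a (k + n) = ∑ j ∈ range n, (a (k + j) - a (k + j + 1)) :=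
          (sum_range_sub' (fun j => a (k + j)) n).symm
      _ ≤ ∑ j ∈ range n, C * b (k + j) := sum_le_sum fun j _ => h (k + j)
      _ ≤ C * ∑' j, b (k + j) := by
          rw [← mul_sum]
          exact mul_le_mul_of_nonneg_left (shifted.sum_le_tsum _ fun j _ => hb _) hC
  exact le_of_tendsto' (tendsto_const_nhds.sub
    (ha.comp (tendsto_atTop_mono (Nat.le_add_left · k) tendsto_id))) partial_sum

theorem tsum_nat_add_le_of_sqrt_le_div {b : ℕ → ℝ} {c : ℝ} (hb : ∀ k, 0 ≤ b k)
    (hc : ∀ k, 1 ≤ k → √(b k) ≤ c / k) {k : ℕ} (hk : 1 ≤ k) :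
    ∑' j, b (k + j) ≤ 2 * c ^ 2 / k := by
  obtain ⟨m, rfl⟩ := Nat.exists_eq_add_of_le' hk
  refine Real.tsum_le_of_sum_range_le (fun j => hb _) fun n => ?_
  calc ∑ j ∈ range n, b (m + 1 + j)
      ≤ ∑ j ∈ range n, c ^ 2 * (((m + 1 + j : ℕ) : ℝ) ^ 2)⁻¹ := by
        refine sum_le_sum fun j _ => ?_
        have := (Real.sqrt_le_iff.1 (hc (m + 1 + j) (by omega))).2
        rwa [div_pow, div_eq_mul_inv] at this
    _ = c ^ 2 * ∑ i ∈ Ioo m (m + 1 + n), ((i : ℝ) ^ 2)⁻¹ := by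
        rw [← mul_sum, ← Ico_add_one_left_eq_Ioo, sum_Ico_eq_sum_range]
        simp
    _ ≤ c ^ 2 * (2 / (m + 1)) := by gcongr; exact sum_Ioo_inv_sq_le m _
    _ = 2 * c ^ 2 / (m + 1 : ℕ) := by push_cast; ring

theorem exists_forall_le_of_sum_abs_le {p : ℕ} {F : (Fin p → ℝ) → ℝ} (hF : Continuous F)
    (R : ℝ) : ∃ m, ∀ x : Fin p → ℝ, ∑ i, |x i| ≤ R → m ≤ F x := by
  obtain ⟨m, hm⟩ := (isCompact_closedBall (0 : Fin p → ℝ) R).bddBelow_image hF.continuousOn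
  refine ⟨m, fun x hx => hm ⟨x, ?_, rfl⟩⟩
  have hR : 0 ≤ R := (sum_nonneg fun i _ => abs_nonneg (x i)).trans hx
  rw [mem_closedBall_zero_iff, pi_norm_le_iff_of_nonneg hR]
  exact fun i => (single_le_sum (fun j _ => abs_nonneg (x j)) (mem_univ i)).trans hx

theorem stepsize_bounds {K MG κ τ : ℝ} (hMG : 0 < MG) (hκ : κ = max 1 ((1 + K ^ 2) / MG))
    (hτ : τ = 1 / (κ * MG)) : 0 < τ ∧ τ * MG ≤ 1 ∧ τ * (1 + K ^ 2) ≤ 1 := by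
  have hκ1 : 1 ≤ κ := hκ ▸ le_max_left _ _
  have hκK : (1 + K ^ 2) / MG ≤ κ := hκ ▸ le_max_right _ _
  have hκMG : 0 < κ * MG := mul_pos (by linarith) hMG
  subst hτ
  refine ⟨by positivity, ?_, ?_⟩ <;> rw [div_mul_eq_mul_div, one_mul, div_le_one hκMG]
  · nlinarith
  · exact (div_le_iff₀ hMG).1 hκK

theorem hasDerivAt_Gobj_add_smul {p : ℕ} {F : (Fin p → ℝ) → ℝ} {DF : (Fin p → ℝ) → (Fin p → ℝ)}
    (hDF : ∀ x, HasFDerivAt F (vecCLM (DF x)) x) (u v a b : Fin p → ℝ) (t : ℝ) :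
    HasDerivAt (fun s => Gobj F (u + s • a) (v + s • b))
      (∑ i, guL DF (u + t • a) (v + t • b) i * a i
        + ∑ i, gvL DF (u + t • a) (v + t • b) i * b i) t := by
  have hline : ∀ x d : Fin p → ℝ, ∀ i, HasDerivAt (fun s => (x + s • d) i) (d i) t :=
    fun x d i => by simpa using ((hasDerivAt_id t).mul_const (d i)).const_add (x i)
  have hsq : ∀ x d : Fin p → ℝ, HasDerivAt (fun s => ∑ i, (x + s • d) i ^ 2)
      (∑ i, 2 * (x + t • d) i * d i) t := fun x d =>
    HasDerivAt.fun_sum fun i _ => ((hline x d i).fun_pow 2).congr_deriv (by push_cast; ring)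
  have hprod : HasDerivAt (fun s => (u + s • a) * (v + s • b))
      (a * (v + t • b) + (u + t • a) * b) t :=
    hasDerivAt_pi.2 fun i => (hline u a i).mul (hline v b i)
  have hG := (((hsq u a).const_mul (1 / 2)).fun_add ((hsq v b).const_mul (1 / 2))).fun_add
    ((hDF _).comp_hasDerivAt t hprod)
  refine hG.congr_deriv ?_
  have hx : (fun i => (u + t • a) i * (v + t • b) i) = (u + t • a) * (v + t • b) := rfl
  simp only [vecCLM_apply, guL, gvL, hx, mul_sum, ← sum_add_distrib]
  exact sum_congr rfl fun i _ => by simp only [Pi.add_apply, Pi.mul_apply]; ring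

theorem abs_Gobj_add_sub_sub_le {p : ℕ} {F : (Fin p → ℝ) → ℝ}
    {DF : (Fin p → ℝ) → (Fin p → ℝ)} (hDF : ∀ x, HasFDerivAt F (vecCLM (DF x)) x) {L R : ℝ}
    (hlip : ∀ u₁ v₁ u₂ v₂ : Fin p → ℝ,
      (1/2) * ((∑ i, (u₁ i)^2) + ∑ i, (v₁ i)^2) ≤ R →
      (1/2) * ((∑ i, (u₂ i)^2) + ∑ i, (v₂ i)^2) ≤ R →
      Real.sqrt ((∑ i, (guL DF u₁ v₁ i - guL DF u₂ v₂ i)^2)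
          + ∑ i, (gvL DF u₁ v₁ i - gvL DF u₂ v₂ i)^2)
        ≤ L * Real.sqrt ((∑ i, (u₁ i - u₂ i)^2) + ∑ i, (v₁ i - v₂ i)^2))
    {u v a b : Fin p → ℝ} (h₀ : (1/2) * ((∑ i, (u i)^2) + ∑ i, (v i)^2) ≤ R)
    (h₁ : (1/2) * ((∑ i, ((u + a) i)^2) + ∑ i, ((v + b) i)^2) ≤ R) :
    |Gobj F (u + a) (v + b) - Gobj F u v
        - (∑ i, guL DF u v i * a i + ∑ i, gvL DF u v i * b i)|
      ≤ L / 2 * (∑ i, a i ^ 2 + ∑ i, b i ^ 2) := by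
  set S := ∑ i, a i ^ 2 + ∑ i, b i ^ 2
  have hseg : ∀ t ∈ Set.Icc (0 : ℝ) 1,
      (1/2) * ((∑ i, ((u + t • a) i)^2) + ∑ i, ((v + t • b) i)^2) ≤ R := by
    intro t ht
    have := add_le_add (sum_sq_add_smul_le u a ht) (sum_sq_add_smul_le v b ht)
    nlinarith [ht.1, ht.2]
  let D : ℝ → ℝ := fun t =>
    ∑ i, guL DF (u + t • a) (v + t • b) i * a i + ∑ i, gvL DF (u + t • a) (v + t • b) i * b i
  have hD : ∀ t ∈ Set.Icc (0 : ℝ) 1, |D t - D 0| ≤ L * S * t := by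
    intro t ht
    have hdist : √(∑ i, ((u + t • a) i - u i) ^ 2 + ∑ i, ((v + t • b) i - v i) ^ 2)
        = t * √S := by
      have : ∑ i, ((u + t • a) i - u i) ^ 2 + ∑ i, ((v + t • b) i - v i) ^ 2 = t ^ 2 * S := by
        simp only [S, Pi.add_apply, Pi.smul_apply, smul_eq_mul, add_sub_cancel_left, mul_pow,
          mul_add, mul_sum]
      rw [this, Real.sqrt_mul (sq_nonneg t), Real.sqrt_sq ht.1]
    have hgrad := hlip _ _ _ _ (hseg t ht) h₀
    rw [hdist] at hgrad
    simp only [D, zero_smul, add_zero]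
    rw [add_sub_add_comm, ← sum_sub_distrib, ← sum_sub_distrib]
    simp only [← sub_mul]
    calc _ ≤ _ := abs_sum_mul_add_sum_mul_le _ _ _ _
      _ ≤ L * (t * √S) * √S := mul_le_mul_of_nonneg_right hgrad (Real.sqrt_nonneg _)
      _ = L * S * t := by rw [mul_assoc, mul_assoc, Real.mul_self_sqrt (by positivity)]; ring
  have key := abs_sub_sub_deriv_le_of_abs_deriv_sub_le (φ' := D)
    (fun t _ => hasDerivAt_Gobj_add_smul hDF u v a b t) hD
  simp only [D, one_smul, zero_smul, add_zero] at key
  linarith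

theorem Gobj_gradStep_descent {p : ℕ} {F : (Fin p → ℝ) → ℝ}
    {DF : (Fin p → ℝ) → (Fin p → ℝ)} (hDF : ∀ x, HasFDerivAt F (vecCLM (DF x)) x) {L R τ : ℝ}
    (hlip : ∀ u₁ v₁ u₂ v₂ : Fin p → ℝ,
      (1/2) * ((∑ i, (u₁ i)^2) + ∑ i, (v₁ i)^2) ≤ R →
      (1/2) * ((∑ i, (u₂ i)^2) + ∑ i, (v₂ i)^2) ≤ R →
      Real.sqrt ((∑ i, (guL DF u₁ v₁ i - guL DF u₂ v₂ i)^2)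
          + ∑ i, (gvL DF u₁ v₁ i - gvL DF u₂ v₂ i)^2)
        ≤ L * Real.sqrt ((∑ i, (u₁ i - u₂ i)^2) + ∑ i, (v₁ i - v₂ i)^2))
    (hτ : 0 ≤ τ) (hτL : τ * L ≤ 1) {u v u' v' : Fin p → ℝ}
    (h₀ : (1/2) * ((∑ i, (u i)^2) + ∑ i, (v i)^2) ≤ R)
    (h₁ : (1/2) * ((∑ i, (u' i)^2) + ∑ i, (v' i)^2) ≤ R)
    (hu' : u' = u - τ • guL DF u v) (hv' : v' = v - τ • gvL DF u v) :
    Gobj F u' v' + τ / 2 * gradGsqL DF u v ≤ Gobj F u v ∧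
      Gobj F u v - Gobj F u' v' ≤ 3 * τ / 2 * gradGsqL DF u v := by
  rw [hu', hv', sub_eq_add_neg u, sub_eq_add_neg v] at h₁ ⊢
  have htaylor := abs_Gobj_add_sub_sub_le hDF hlip h₀ h₁
  have hinner : ∑ i, guL DF u v i * (-(τ • guL DF u v)) i
      + ∑ i, gvL DF u v i * (-(τ • gvL DF u v)) i = -τ * gradGsqL DF u v := by
    rw [gradGsqL, mul_add, mul_sum, mul_sum]
    simp only [Pi.neg_apply, Pi.smul_apply, smul_eq_mul]
    congr 1 <;> exact sum_congr rfl fun i _ => by ring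
  have hstep : ∑ i, (-(τ • guL DF u v)) i ^ 2 + ∑ i, (-(τ • gvL DF u v)) i ^ 2
      = τ ^ 2 * gradGsqL DF u v := by
    rw [gradGsqL, mul_add, mul_sum, mul_sum]
    simp only [Pi.neg_apply, Pi.smul_apply, smul_eq_mul]
    congr 1 <;> exact sum_congr rfl fun i _ => by ring
  have hgrad : 0 ≤ gradGsqL DF u v := by unfold gradGsqL; positivity
  have hquad : L / 2 * (τ ^ 2 * gradGsqL DF u v) ≤ τ / 2 * gradGsqL DF u v := by
    nlinarith [mul_nonneg hτ hgrad]
  rw [hinner, hstep] at htaylor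
  constructor <;> linarith [(abs_le.1 htaylor).1, (abs_le.1 htaylor).2]

theorem Gobj_sub_lassoObjective {p : ℕ} (F : (Fin p → ℝ) → ℝ) (u v : Fin p → ℝ) :
    Gobj F u v - lassoObjective F (u * v) = ∑ i, ((u i ^ 2 + v i ^ 2) / 2 - |u i * v i|) := by
  rw [Gobj, lassoObjective, show (fun i => u i * v i) = u * v from rfl, sum_sub_distrib,
    ← sum_div, sum_add_distrib]
  simp only [Pi.mul_apply]
  ring

theorem lassoObjective_le_Gobj {p : ℕ} (F : (Fin p → ℝ) → ℝ) (u v : Fin p → ℝ) :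
    lassoObjective F (u * v) ≤ Gobj F u v := by
  have := Gobj_sub_lassoObjective F u v
  have : 0 ≤ ∑ i, ((u i ^ 2 + v i ^ 2) / 2 - |u i * v i|) :=
    sum_nonneg fun i _ => sub_nonneg.2 (abs_mul_le_half_sq_add_sq _ _)
  linarith

theorem Gobj_sub_lassoObjective_le {p : ℕ} (F : (Fin p → ℝ) → ℝ) (u v : Fin p → ℝ) :
    Gobj F u v - lassoObjective F (u * v) ≤ (∑ i, |u i ^ 2 - v i ^ 2|) / 2 := by
  rw [Gobj_sub_lassoObjective, sum_div]
  exact sum_le_sum fun i _ => half_sq_add_sq_sub_abs_mul_le _ _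

theorem bddBelow_range_Gobj {p : ℕ} {F : (Fin p → ℝ) → ℝ} (hF : Continuous F) {R : ℝ}
    {U V : ℕ → Fin p → ℝ} (hball : ∀ k, (1/2) * ((∑ i, (U k i)^2) + ∑ i, (V k i)^2) ≤ R) :
    BddBelow (Set.range fun k => Gobj F (U k) (V k)) := by
  obtain ⟨m, hm⟩ := exists_forall_le_of_sum_abs_le hF R
  refine ⟨m, ?_⟩
  rintro _ ⟨k, rfl⟩
  calc m ≤ F (U k * V k) := hm _ ((sum_abs_mul_le _ _).trans (hball k))
    _ ≤ lassoObjective F (U k * V k) := le_add_of_nonneg_right (sum_nonneg fun i _ => abs_nonneg _)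
    _ ≤ Gobj F (U k) (V k) := lassoObjective_le_Gobj F _ _

theorem sum_abs_sq_sub_sq_gradStep_le {p : ℕ} {DF : (Fin p → ℝ) → (Fin p → ℝ)} {K τ : ℝ}
    {u v : Fin p → ℝ} (hτ : 0 ≤ τ) (hτK : τ * (1 + K ^ 2) ≤ 1) (hK : ∀ i, |DF (u * v) i| ≤ K) :
    ∑ i, |(u - τ • guL DF u v) i ^ 2 - (v - τ • gvL DF u v) i ^ 2|
      ≤ (1 - τ) * ∑ i, |u i ^ 2 - v i ^ 2| := by
  rw [mul_sum]
  refine sum_le_sum fun i _ => abs_sq_sub_sq_gradStep_le (w := DF (u * v) i) hτ ?_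
  have : DF (u * v) i ^ 2 ≤ K ^ 2 := sq_le_sq' (abs_le.1 (hK i)).1 (abs_le.1 (hK i)).2
  nlinarith

theorem tendsto_Gobj_sub_lassoObjective_of_gradStep {p : ℕ} {F : (Fin p → ℝ) → ℝ}
    {DF : (Fin p → ℝ) → (Fin p → ℝ)} {K τ : ℝ} {U V : ℕ → Fin p → ℝ} (hτ : 0 < τ)
    (hτK : τ * (1 + K ^ 2) ≤ 1) (hK : ∀ k i, |DF (U k * V k) i| ≤ K)
    (hU : ∀ k, U (k + 1) = U k - τ • guL DF (U k) (V k))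
    (hV : ∀ k, V (k + 1) = V k - τ • gvL DF (U k) (V k)) :
    Tendsto (fun k => Gobj F (U k) (V k) - lassoObjective F (U k * V k)) atTop (𝓝 0) := by
  set D := fun k => ∑ i, |U k i ^ 2 - V k i ^ 2|
  have hτ1 : 1 - τ < 1 := by linarith
  have hτ0 : 0 ≤ 1 - τ := by nlinarith [sq_nonneg K]
  have hD : ∀ k, D k ≤ (1 - τ) ^ k * D 0 := fun k => le_geom hτ0 k fun j _ => by
    simp only [D, hU, hV]
    exact sum_abs_sq_sub_sq_gradStep_le hτ.le hτK (hK j)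
  refine squeeze_zero (fun k => sub_nonneg.2 (lassoObjective_le_Gobj F _ _))
    (fun k => (Gobj_sub_lassoObjective_le F _ _).trans
      (div_le_div_of_nonneg_right (hD k) zero_le_two)) ?_
  simpa using ((tendsto_pow_atTop_nhds_zero_of_lt_one hτ0 hτ1).mul_const (D 0)).div_const 2

theorem statement11_general {p : ℕ}
    (F : (Fin p → ℝ) → ℝ) (DF : (Fin p → ℝ) → (Fin p → ℝ))
    (hDF : ∀ x, HasFDerivAt F (vecCLM (DF x)) x)
    (K B MG κ τ : ℝ)
    (hK : ∀ x : Fin p → ℝ, (∑ i, |x i|) ≤ B^2/2 → ∀ i, |DF x i| ≤ K)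
    (hMGlip : ∀ u₁ v₁ u₂ v₂ : Fin p → ℝ,
      (1/2) * ((∑ i, (u₁ i)^2) + ∑ i, (v₁ i)^2) ≤ B^2/2 →
      (1/2) * ((∑ i, (u₂ i)^2) + ∑ i, (v₂ i)^2) ≤ B^2/2 →
      Real.sqrt ((∑ i, (guL DF u₁ v₁ i - guL DF u₂ v₂ i)^2)
          + ∑ i, (gvL DF u₁ v₁ i - gvL DF u₂ v₂ i)^2)
        ≤ MG * Real.sqrt ((∑ i, (u₁ i - u₂ i)^2) + ∑ i, (v₁ i - v₂ i)^2))
    (hMGpos : 0 < MG)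
    (hκ : κ = max 1 ((1 + K^2) / MG))
    (hτ : τ = 1 / (κ * MG))
    (U V : ℕ → Fin p → ℝ)
    (hUrec : ∀ k, U (k+1) = fun i => U k i - τ * guL DF (U k) (V k) i)
    (hVrec : ∀ k, V (k+1) = fun i => V k i - τ * gvL DF (U k) (V k) i)
    (hball : ∀ k, (1/2) * ((∑ i, (U k i)^2) + ∑ i, (V k i)^2) ≤ B^2/2) :
    ∃ C > 0, ∃ Φlim : ℝ,
      Tendsto (fun k => F (fun i => U k i * V k i) + ∑ i, |U k i * V k i|)
        atTop (nhds Φlim) ∧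
      (∀ k : ℕ,
        F (fun i => U k i * V k i) + (∑ i, |U k i * V k i|) - Φlim
          ≤ C * (∑' j : ℕ, gradGsqL DF (U (k + j)) (V (k + j)))
            + C * (1 - 1/(κ * MG))^k) ∧
      ((∃ c : ℝ, ∀ k : ℕ, 1 ≤ k → Real.sqrt (gradGsqL DF (U k) (V k)) ≤ c / k) →
        ∃ c' : ℝ, ∀ k : ℕ, 1 ≤ k →
          F (fun i => U k i * V k i) + (∑ i, |U k i * V k i|) - Φlim ≤ c' / k) := by
  obtain ⟨hτ0, hτMG, hτK⟩ := stepsize_bounds hMGpos hκ hτ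
  have hgrad : ∀ k, 0 ≤ gradGsqL DF (U k) (V k) := fun k => by unfold gradGsqL; positivity
  have hdesc k := Gobj_gradStep_descent hDF hMGlip hτ0.le hτMG (hball k) (hball (k + 1))
    (hUrec k) (hVrec k)
  obtain ⟨hsum, hlim⟩ := summable_and_tendsto_iInf_of_add_mul_le (half_pos hτ0) hgrad
    (bddBelow_range_Gobj (continuous_iff_continuousAt.2 fun x => (hDF x).continuousAt) hball)
    fun k => (hdesc k).1
  have hgap := tendsto_Gobj_sub_lassoObjective_of_gradStep (F := F) hτ0 hτK
    (fun k => hK _ ((sum_abs_mul_le (U k) (V k)).trans (hball k))) hUrec hVrec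
  have hΦ : Tendsto (fun k => lassoObjective F (U k * V k)) atTop
      (𝓝 (⨅ j, Gobj F (U j) (V j))) := by
    simpa only [sub_sub_cancel, sub_zero] using hlim.sub hgap
  have hbound k : lassoObjective F (U k * V k) - ⨅ j, Gobj F (U j) (V j)
      ≤ 3 * τ / 2 * ∑' j, gradGsqL DF (U (k + j)) (V (k + j)) :=
    (sub_le_sub_right (lassoObjective_le_Gobj F _ _) _).trans
      (sub_le_mul_tsum_of_sub_succ_le (by positivity) hgrad hsum hlim (fun k => (hdesc k).2) k)
  have hρ : 0 ≤ 1 - 1 / (κ * MG) := by rw [← hτ]; nlinarith [sq_nonneg K]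
  refine ⟨3 * τ / 2, by positivity, _, hΦ, fun k => ?_, ?_⟩
  · exact (hbound k).trans (le_add_of_nonneg_right (by positivity))
  · rintro ⟨c, hc⟩
    refine ⟨3 * τ / 2 * (2 * c ^ 2), fun k hk => (hbound k).trans ?_⟩
    rw [mul_div_assoc (3 * τ / 2)]
    exact mul_le_mul_of_nonneg_left (tsum_nat_add_le_of_sqrt_le_div hgrad hc hk) (by positivity)

/-- STATEMENT 11 (Objective convergence controlled by gradient convergence),
Lasso case (trivial groups).  `F` is convex, `C^{1,1}` with
`‖∇F(x)−∇F(x')‖_∞ ≤ M_F ‖x−x'‖₁`, gradient bound `K` on `{‖x‖₁ ≤ B²/2}` with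
`B² = 2G(u₀,v₀)`; `M_G` bounds the Lipschitz constant of `∇G` on the ball,
`κ = max(1, (1+K²)/M_G)`, `τ = 1/(κM_G)`, `ρ = 1 − 1/(κM_G)`,
`x_k = u_k·v_k` and `Φ(x) = F(x) + ‖x‖₁`.  Then for some `C > 0`,
`Φ(x_k) − lim_j Φ(x_j) ≤ C Σ_{j≥k} ‖∇G(u_j,v_j)‖² + C ρ^k`; in particular, if
`‖∇G(u_k,v_k)‖ = O(1/k)` then `Φ(x_k)` converges at rate `O(1/k)`. -/
theorem statement11 {p : ℕ}
    (F : (Fin p → ℝ) → ℝ) (DF : (Fin p → ℝ) → (Fin p → ℝ))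
    (hDF : ∀ x, HasFDerivAt F (vecCLM (DF x)) x)
    (hconv : ConvexOn ℝ Set.univ F)
    (MF K B MG κ τ : ℝ)
    (hlip : ∀ x x' : Fin p → ℝ, ∀ i, |DF x i - DF x' i| ≤ MF * ∑ i', |x i' - x' i'|)
    (hK : ∀ x : Fin p → ℝ, (∑ i, |x i|) ≤ B^2/2 → ∀ i, |DF x i| ≤ K)
    (u₀ v₀ : Fin p → ℝ)
    (hB : B^2 = 2 * Gobj F u₀ v₀)
    (hMGlip : ∀ u₁ v₁ u₂ v₂ : Fin p → ℝ,
      (1/2) * ((∑ i, (u₁ i)^2) + ∑ i, (v₁ i)^2) ≤ B^2/2 →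
      (1/2) * ((∑ i, (u₂ i)^2) + ∑ i, (v₂ i)^2) ≤ B^2/2 →
      Real.sqrt ((∑ i, (guL DF u₁ v₁ i - guL DF u₂ v₂ i)^2)
          + ∑ i, (gvL DF u₁ v₁ i - gvL DF u₂ v₂ i)^2)
        ≤ MG * Real.sqrt ((∑ i, (u₁ i - u₂ i)^2) + ∑ i, (v₁ i - v₂ i)^2))
    (hMGpos : 0 < MG)
    (hκ : κ = max 1 ((1 + K^2) / MG))
    (hτ : τ = 1 / (κ * MG))
    (U V : ℕ → Fin p → ℝ) (hU0 : U 0 = u₀) (hV0 : V 0 = v₀)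
    (hUrec : ∀ k, U (k+1) = fun i => U k i - τ * guL DF (U k) (V k) i)
    (hVrec : ∀ k, V (k+1) = fun i => V k i - τ * gvL DF (U k) (V k) i)
    (hball : ∀ k, (1/2) * ((∑ i, (U k i)^2) + ∑ i, (V k i)^2) ≤ B^2/2) :
    ∃ C > 0, ∃ Φlim : ℝ,
      Tendsto (fun k => F (fun i => U k i * V k i) + ∑ i, |U k i * V k i|)
        atTop (nhds Φlim) ∧
      (∀ k : ℕ,
        F (fun i => U k i * V k i) + (∑ i, |U k i * V k i|) - Φlim
          ≤ C * (∑' j : ℕ, gradGsqL DF (U (k + j)) (V (k + j)))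
            + C * (1 - 1/(κ * MG))^k) ∧
      ((∃ c : ℝ, ∀ k : ℕ, 1 ≤ k → Real.sqrt (gradGsqL DF (U k) (V k)) ≤ c / k) →
        ∃ c' : ℝ, ∀ k : ℕ, 1 ≤ k →
          F (fun i => U k i * V k i) + (∑ i, |U k i * V k i|) - Φlim ≤ c' / k) :=
  statement11_general F DF hDF K B MG κ τ hK hMGlip hMGpos hκ hτ U V hUrec hVrec hball
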